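/- arXiv:2212.03653 — 2 statements merged into one kernel-verified Lean document; each statement's English description precedes it below -/
import Mathlib

section
/- There is no injective group homomorphism from S4 × C2 into PGL(2,ℂ). -/
/-!
Lift the central involution `z` of `S₄ × C₂` and two non-commuting 3-cycles `x`, `y` to matrices
`A`, `B`, `C` in `GL(2,ℂ)`. The commutator of `A` and `B` is a scalar `c`; since `A²` and `B³`
are scalars, `c² = c³ = 1`, so `A` and `B` commute, and likewise `A` and `C`. As `z ≠ 1`, `A` is
not scalar, and the commutant of a non-scalar `2 × 2` matrix is `K[A] = K + K A`, which is
commutative. Hence `B` and `C` commute, contradicting injectivity on `x`, `y`.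
-/

noncomputable section
abbrev GL2 : Type := Matrix.GeneralLinearGroup (Fin 2) ℂ
/-- `PGL(2,ℂ)` as the quotient of `GL(2,ℂ)` by its center. -/
abbrev PGL2 : Type := GL2 ⧸ Subgroup.center GL2

open Subgroup
open scoped commutatorElement

section CentralCommutator

variable {G : Type*} [Group G] {a b : G}

theorem commutatorElement_pow_right_of_mem_center (h : ⁅a, b⁆ ∈ center G) (n : ℕ) :
    ⁅a, b ^ n⁆ = ⁅a, b⁆ ^ n := by
  have hconj : a * b * a⁻¹ = ⁅a, b⁆ * b := by group
  have hcomm : Commute ⁅a, b⁆ b := (mem_center_iff.mp h b).symm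
  calc ⁅a, b ^ n⁆ = (a * b * a⁻¹) ^ n * (b ^ n)⁻¹ := by rw [conj_pow, commutatorElement_def]
    _ = ⁅a, b⁆ ^ n := by rw [hconj, hcomm.mul_pow, mul_inv_cancel_right]

theorem commute_of_commutatorElement_mem_center {m n : ℕ} (hmn : m.Coprime n)
    (h : ⁅a, b⁆ ∈ center G) (ha : a ^ m ∈ center G) (hb : b ^ n ∈ center G) : Commute a b := by
  have hm : ⁅a, b⁆ ^ m = 1 := by
    have h' : ⁅b, a⁆ ∈ center G := commutatorElement_inv a b ▸ inv_mem h
    rw [← inv_inj, ← inv_pow, commutatorElement_inv, ← commutatorElement_pow_right_of_mem_center h',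
      commutatorElement_eq_one_iff_commute.mpr (mem_center_iff.mp ha b), inv_one]
  have hn : ⁅a, b⁆ ^ n = 1 := by
    rw [← commutatorElement_pow_right_of_mem_center h,
      commutatorElement_eq_one_iff_commute.mpr (mem_center_iff.mp hb a)]
  exact commutatorElement_eq_one_iff_commute.mp ((pow_eq_one_iff_of_coprime hmn).mp ⟨hm, hn⟩)

theorem commute_of_commute_mk_center {m n : ℕ} (hmn : m.Coprime n)
    (hab : Commute (a : G ⧸ center G) b) (ha : (a : G ⧸ center G) ^ m = 1)
    (hb : (b : G ⧸ center G) ^ n = 1) : Commute a b := by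
  simp only [← QuotientGroup.mk_pow, QuotientGroup.eq_one_iff] at ha hb
  refine commute_of_commutatorElement_mem_center hmn ?_ ha hb
  rw [← QuotientGroup.eq_one_iff, ← QuotientGroup.mk'_apply, map_commutatorElement]
  exact commutatorElement_eq_one_iff_commute.mpr hab

end CentralCommutator

namespace Matrix

variable {K : Type*} [Field K]

theorem exists_eq_smul_one_add_smul_of_commute {A B : Matrix (Fin 2) (Fin 2) K}
    (hA : A ∉ Set.range (scalar (Fin 2))) (h : Commute A B) :
    ∃ α β : K, B = α • 1 + β • A := by
  obtain ⟨a, b, c, d, rfl⟩ : ∃ a b c d, A = !![a, b; c, d] := ⟨_, _, _, _, eta_fin_two A⟩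
  obtain ⟨p, q, r, s, rfl⟩ : ∃ p q r s, B = !![p, q; r, s] := ⟨_, _, _, _, eta_fin_two B⟩
  have h' := h.eq
  rw [mul_fin_two, mul_fin_two, EmbeddingLike.apply_eq_iff_eq] at h'
  simp only [vecCons_inj, and_true, and_assoc] at h'
  obtain ⟨h00, h01, h10, -⟩ := h'
  have hne : b ≠ 0 ∨ c ≠ 0 ∨ a - d ≠ 0 := by
    by_contra! h0
    obtain ⟨rfl, rfl, had⟩ := h0
    exact hA ⟨d, by rw [sub_eq_zero.mp had]; ext i j; fin_cases i <;> fin_cases j <;> rfl⟩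
  -- `(a - d, b, c)` is nonzero and, by commutativity, proportional to `(p - s, q, r)`.
  suffices ∃ β, b * β = q ∧ c * β = r ∧ (a - d) * β = p - s by
    obtain ⟨β, hq, hr, hp⟩ := this
    refine ⟨s - β * d, β, ?_⟩
    ext i j
    fin_cases i <;> fin_cases j <;> simp
    · linear_combination -hp
    · linear_combination -hq
    · linear_combination -hr
  rcases hne with hb | hc | had
  · refine ⟨q / b, mul_div_cancel₀ q hb, ?_, ?_⟩ <;> rw [mul_div_assoc', div_eq_iff hb]
    · linear_combination -h00
    · linear_combination h01
  · refine ⟨r / c, ?_, mul_div_cancel₀ r hc, ?_⟩ <;> rw [mul_div_assoc', div_eq_iff hc]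
    · linear_combination h00
    · linear_combination -h10
  · refine ⟨(p - s) / (a - d), ?_, ?_, mul_div_cancel₀ _ had⟩ <;>
      rw [mul_div_assoc', div_eq_iff had]
    · linear_combination -h01
    · linear_combination h10

theorem commute_of_commute_of_notMem_range_scalar {A B C : Matrix (Fin 2) (Fin 2) K}
    (hA : A ∉ Set.range (scalar (Fin 2))) (hB : Commute A B) (hC : Commute A C) :
    Commute B C := by
  obtain ⟨α, β, rfl⟩ := exists_eq_smul_one_add_smul_of_commute hA hB
  exact ((Commute.one_left C).smul_left α).add_left (hC.smul_left β)

theorem GeneralLinearGroup.commute_of_commute_of_notMem_center {A B C : GL (Fin 2) K}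
    (hA : A ∉ center (GL (Fin 2) K)) (hB : Commute A B) (hC : Commute A C) : Commute B C := by
  rw [GeneralLinearGroup.mem_center_iff_val_mem_range_scalar] at hA
  exact Units.ext (commute_of_commute_of_notMem_range_scalar hA
    (congrArg Units.val hB) (congrArg Units.val hC))

end Matrix

/-- There is no injective group homomorphism from `S₄ × C₂` into `PGL(2,ℂ)`. -/
theorem no_injective_hom_S4_times_C2_into_PGL2 :
    ¬ ∃ f : (Equiv.Perm (Fin 4) × Multiplicative (ZMod 2)) →* PGL2,
      Function.Injective f := by
  rintro ⟨f, hf⟩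
  let z : Equiv.Perm (Fin 4) × Multiplicative (ZMod 2) := (1, Multiplicative.ofAdd 1)
  let x : Equiv.Perm (Fin 4) × Multiplicative (ZMod 2) := (Equiv.swap 0 1 * Equiv.swap 0 2, 1)
  let y : Equiv.Perm (Fin 4) × Multiplicative (ZMod 2) := (Equiv.swap 0 1 * Equiv.swap 0 3, 1)
  have hz : z ≠ 1 := by decide
  have hz_central : z ∈ center _ := mem_center_iff.mpr (by decide)
  obtain ⟨A, hA⟩ := QuotientGroup.mk_surjective (f z)
  obtain ⟨B, hB⟩ := QuotientGroup.mk_surjective (f x)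
  obtain ⟨C, hC⟩ := QuotientGroup.mk_surjective (f y)
  have commute_A {g} {D : GL2} (hg : g ^ 3 = 1) (hD : (D : PGL2) = f g) : Commute A D :=
    commute_of_commute_mk_center (m := 2) (n := 3) (by norm_num)
      (hA ▸ hD ▸ (Commute.map (mem_center_iff.mp hz_central g) f).symm)
      (by rw [hA, ← map_pow, show z ^ 2 = 1 by decide, map_one])
      (by rw [hD, ← map_pow, hg, map_one])
  have hA_noncentral : A ∉ center GL2 := fun h ↦
    hz (hf (by rw [map_one, ← hA, QuotientGroup.eq_one_iff]; exact h))
  have hBC : Commute (f x) (f y) := by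
    rw [← hB, ← hC]
    exact (Matrix.GeneralLinearGroup.commute_of_commute_of_notMem_center hA_noncentral
      (commute_A (by decide) hB) (commute_A (by decide) hC)).map (QuotientGroup.mk' _)
  exact absurd (hBC.of_map hf).eq (by decide)
end
end

section
/- Let k be an algebraically closed field of characteristic 0, fix a primitive 11th root of unity ξ ∈ k, and let σ act on k^4 by σ(x0,x1,x2,x3) = (x0, ξx1, ξ²x2, ξ³x3). Then the space of quartic forms F in x0,...,x3 such that σ·F = ξ⁶·F is spanned by the monomials x0²x3², x0x1x2x3, x0x2³, x1³x3, x1²x2², and the subspace of such F that additionally are singular at the point (1,1,1,1) (i.e. F and all four partial derivatives vanish there) is 2-dimensional, spanned by (x0x3 − x1x2)² and x0²x3² + 3x1²x2² − 2x0x2³ − 2x1³x3. -/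
/-!
The substitution `xᵢ ↦ ξ^{wᵢ} xᵢ` multiplies the monomial `x^d` by `ξ^{w·d}`, so a polynomial is a
`ξ⁶`-eigenvector exactly when every monomial of its support has weight `≡ 6 (mod 11)`. For a
quartic the weight `d₁ + 2d₂ + 3d₃` is at most 12, hence equal to 6, which leaves five exponents.
For `F = ∑ cⱼ x^{eⱼ}` one has `∂F/∂xᵢ (1,1,1,1) = ∑ cⱼ (eⱼ)ᵢ`, so singularity at `(1,1,1,1)` is a
linear system on the coefficient vector `c`; its solution space is spanned by the coefficient
vectors of the two given quartics.
-/

open MvPolynomial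

section DiagonalAction

variable {σ R : Type*}

theorem aeval_C_pow_mul_X_monomial [CommSemiring R] (ξ : R) (w : σ → ℕ) (d : σ →₀ ℕ) (a : R) :
    aeval (fun i => C (ξ ^ w i) * X i) (monomial d a) =
      monomial d (ξ ^ Finsupp.weight w d * a) := by
  rw [aeval_monomial, monomial_eq, Finsupp.weight_apply, Finsupp.sum,
    ← Finset.prod_pow_eq_pow_sum]
  simp only [Finsupp.prod, mul_pow, Finset.prod_mul_distrib, ← C_pow, ← map_prod, ← pow_mul,
    smul_eq_mul, algebraMap_eq, map_mul, mul_comm (d _)]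
  ring

theorem coeff_aeval_C_pow_mul_X [CommSemiring R] (ξ : R) (w : σ → ℕ) (F : MvPolynomial σ R)
    (d : σ →₀ ℕ) :
    coeff d (aeval (fun i => C (ξ ^ w i) * X i) F) = ξ ^ Finsupp.weight w d * coeff d F := by
  classical
  induction F using MvPolynomial.induction_on' with
  | monomial e a =>
    rw [aeval_C_pow_mul_X_monomial, coeff_monomial, coeff_monomial]
    split_ifs with h <;> simp [h]
  | add p q hp hq => rw [map_add, coeff_add, coeff_add, hp, hq, mul_add]

theorem aeval_C_pow_mul_X_eq_C_mul_iff [CommRing R] [IsDomain R] (ξ c : R) (w : σ → ℕ)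
    (F : MvPolynomial σ R) :
    aeval (fun i => C (ξ ^ w i) * X i) F = C c * F ↔
      F ∈ restrictSupport R {d | ξ ^ Finsupp.weight w d = c} := by
  rw [mem_restrictSupport_iff]
  constructor
  · intro h d hd
    have hd' := congrArg (coeff d) h
    rw [coeff_aeval_C_pow_mul_X, coeff_C_mul] at hd'
    exact mul_right_cancel₀ (mem_support_iff.mp hd) hd'
  · intro h
    ext d
    rw [coeff_aeval_C_pow_mul_X, coeff_C_mul]
    by_cases hd : d ∈ F.support
    · rw [h hd]
    · rw [notMem_support_iff.mp hd, mul_zero, mul_zero]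

theorem isHomogeneous_iff_mem_restrictSupport [CommSemiring R] (F : MvPolynomial σ R) (n : ℕ) :
    F.IsHomogeneous n ↔ F ∈ restrictSupport R {d | d.degree = n} := by
  rw [← mem_homogeneousSubmodule, homogeneousSubmodule_eq_finsupp_supported]
  rfl

theorem isHomogeneous_and_aeval_C_pow_mul_X_eq_iff [CommRing R] [IsDomain R] (ξ c : R)
    (w : σ → ℕ) (n : ℕ) (F : MvPolynomial σ R) :
    (F.IsHomogeneous n ∧ aeval (fun i => C (ξ ^ w i) * X i) F = C c * F) ↔
      F ∈ restrictSupport R {d | d.degree = n ∧ ξ ^ Finsupp.weight w d = c} := by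
  rw [isHomogeneous_iff_mem_restrictSupport, aeval_C_pow_mul_X_eq_C_mul_iff,
    mem_restrictSupport_iff, mem_restrictSupport_iff, mem_restrictSupport_iff, Set.ofPred_and,
    Set.subset_inter_iff]

end DiagonalAction

theorem eval_one_pderiv_sum_smul_monomial {σ ι R : Type*} [CommSemiring R] [Fintype ι]
    (e : ι → σ →₀ ℕ) (c : ι → R) (i : σ) :
    eval (fun _ => 1) (pderiv i (∑ j, c j • monomial (e j) 1)) = ∑ j, c j * e j i := by
  simp [eval_monomial]

noncomputable def semiinvariantExponents (j : Fin 5) : Fin 4 →₀ ℕ :=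
  Finsupp.equivFunOnFinite.symm
    (![![2, 0, 0, 2], ![1, 1, 1, 1], ![1, 0, 3, 0], ![0, 3, 0, 1], ![0, 2, 2, 0]] j)

theorem mem_range_semiinvariantExponents_iff (d : Fin 4 →₀ ℕ) :
    d ∈ Set.range semiinvariantExponents ↔
      d 0 + d 1 + d 2 + d 3 = 4 ∧ d 1 + 2 * d 2 + 3 * d 3 = 6 := by
  simp only [Set.mem_range, Finsupp.ext_iff, Fin.exists_fin_succ, Fin.forall_fin_succ,
    IsEmpty.exists_iff, IsEmpty.forall_iff, and_true, or_false]
  simp only [semiinvariantExponents, Finsupp.coe_equivFunOnFinite_symm, Fin.succ_zero_eq_one,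
    Fin.succ_one_eq_two, Fin.reduceSucc, Matrix.cons_val]
  omega

theorem setOf_degree_eq_four_and_pow_weight_eq_pow_six {M : Type*} [CommMonoid M] {ξ : M}
    (hξ : IsPrimitiveRoot ξ 11) :
    {d : Fin 4 →₀ ℕ | d.degree = 4 ∧ ξ ^ Finsupp.weight (fun i : Fin 4 => (i : ℕ)) d = ξ ^ 6} =
      Set.range semiinvariantExponents := by
  ext d
  rw [mem_range_semiinvariantExponents_iff, Set.mem_ofPred_eq, Finsupp.degree_eq_sum,
    Finsupp.weight_eq_sum, (hξ.isOfFinOrder (by norm_num)).pow_inj_mod, ← hξ.eq_orderOf]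
  simp only [Fin.sum_univ_four, Fin.isValue, Fin.coe_ofNat_eq_mod, Nat.reduceMod, smul_eq_mul]
  omega

section Quartics

variable (k : Type*)

noncomputable def semiinvariantMonomials [CommSemiring k] : Fin 5 → MvPolynomial (Fin 4) k :=
  ![X 0 ^ 2 * X 3 ^ 2, X 0 * X 1 * X 2 * X 3, X 0 * X 2 ^ 3, X 1 ^ 3 * X 3, X 1 ^ 2 * X 2 ^ 2]

noncomputable def singularSemiinvariants [CommRing k] : Fin 2 → MvPolynomial (Fin 4) k :=
  ![(X 0 * X 3 - X 1 * X 2) ^ 2,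
    X 0 ^ 2 * X 3 ^ 2 + 3 * X 1 ^ 2 * X 2 ^ 2 - 2 * X 0 * X 2 ^ 3 - 2 * X 1 ^ 3 * X 3]

variable {k}

theorem monomial_semiinvariantExponents [CommSemiring k] (j : Fin 5) :
    monomial (semiinvariantExponents j) (1 : k) = semiinvariantMonomials k j := by
  rw [monomial_eq, Finsupp.prod_fintype _ _ fun _ => pow_zero _, Fin.prod_univ_four, C_1, one_mul]
  fin_cases j <;> simp [semiinvariantExponents, semiinvariantMonomials]

theorem span_semiinvariantMonomials [CommSemiring k] :
    Submodule.span k (Set.range (semiinvariantMonomials k)) =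
      restrictSupport k (Set.range semiinvariantExponents) := by
  rw [restrictSupport_eq_span, ← Set.range_comp]
  simp only [Function.comp_def, monomial_semiinvariantExponents]

theorem eval_one_pderiv_linearCombination_semiinvariantMonomials [CommSemiring k] (c : Fin 5 → k)
    (i : Fin 4) :
    eval (fun _ => 1) (pderiv i (Fintype.linearCombination k (semiinvariantMonomials k) c)) =
      ∑ j, c j * semiinvariantExponents j i := by
  simp only [Fintype.linearCombination_apply, ← monomial_semiinvariantExponents,
    eval_one_pderiv_sum_smul_monomial]

theorem linearCombination_semiinvariantMonomials_eq_singularSemiinvariants [CommRing k] :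
    Fintype.linearCombination k (semiinvariantMonomials k) ![1, -2, 0, 0, 1] =
      singularSemiinvariants k 0 ∧
    Fintype.linearCombination k (semiinvariantMonomials k) ![1, 0, -2, -2, 3] =
      singularSemiinvariants k 1 := by
  simp only [Fintype.linearCombination_apply, Fin.sum_univ_five, semiinvariantMonomials,
    singularSemiinvariants, smul_eq_C_mul, Matrix.cons_val, C_0, C_1, C_neg, map_ofNat]
  constructor <;> ring

theorem sum_mul_semiinvariantExponents_eq_zero_iff [Field k] [NeZero (2 : k)] (c : Fin 5 → k) :
    (∀ i, ∑ j, c j * (semiinvariantExponents j i : k) = 0) ↔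
      ∃ a b : k, c = a • ![1, -2, 0, 0, 1] + b • ![1, 0, -2, -2, 3] := by
  constructor
  · intro h
    have h₀ := h 0
    have h₂ := h 2
    have h₃ := h 3
    simp only [Fin.sum_univ_five, semiinvariantExponents, Finsupp.coe_equivFunOnFinite_symm,
      Matrix.cons_val, Nat.cast_ofNat, Nat.cast_one, Nat.cast_zero, mul_zero, mul_one, add_zero,
      zero_add] at h₀ h₂ h₃
    refine ⟨c 0 + c 2 / 2, -(c 2 / 2), funext fun j => ?_⟩
    fin_cases j <;>
      simp only [Fin.zero_eta, Fin.mk_one, Fin.reduceFinMk, Pi.add_apply, Pi.smul_apply,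
        Matrix.cons_val, smul_eq_mul] <;>
      field_simp
    · ring
    · linear_combination 2 * h₀
    · ring
    · linear_combination 2 * (h₃ - h₀)
    · linear_combination h₂ - h₀
  · rintro ⟨a, b, rfl⟩ i
    fin_cases i <;>
      simp only [Fin.zero_eta, Fin.mk_one, Fin.reduceFinMk, Fin.sum_univ_five,
        semiinvariantExponents, Finsupp.coe_equivFunOnFinite_symm, Matrix.cons_val,
        Nat.cast_ofNat, Nat.cast_one, Nat.cast_zero, Pi.add_apply, Pi.smul_apply, smul_eq_mul] <;>
      ring

theorem isHomogeneous_four_and_semiinvariant_iff_mem_span [CommRing k] [IsDomain k] {ξ : k}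
    (hξ : IsPrimitiveRoot ξ 11) (F : MvPolynomial (Fin 4) k) :
    (F.IsHomogeneous 4 ∧ aeval (fun i : Fin 4 => C (ξ ^ (i : ℕ)) * X i) F = C (ξ ^ 6) * F) ↔
      F ∈ Submodule.span k (Set.range (semiinvariantMonomials k)) := by
  rw [isHomogeneous_and_aeval_C_pow_mul_X_eq_iff,
    setOf_degree_eq_four_and_pow_weight_eq_pow_six hξ, span_semiinvariantMonomials]

theorem mem_span_singularSemiinvariants_iff [Field k] [NeZero (2 : k)]
    (F : MvPolynomial (Fin 4) k) :
    F ∈ Submodule.span k (Set.range (singularSemiinvariants k)) ↔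
      F ∈ Submodule.span k (Set.range (semiinvariantMonomials k)) ∧
        ∀ i, eval (fun _ => 1) (pderiv i F) = 0 := by
  obtain ⟨hg₀, hg₁⟩ := linearCombination_semiinvariantMonomials_eq_singularSemiinvariants (k := k)
  have hrange : Set.range (singularSemiinvariants k) =
      {singularSemiinvariants k 0, singularSemiinvariants k 1} := by
    rw [singularSemiinvariants, Matrix.range_cons_cons_empty]
    rfl
  rw [hrange, Submodule.mem_span_pair, ← Fintype.range_linearCombination]
  constructor
  · rintro ⟨a, b, rfl⟩
    rw [← hg₀, ← hg₁, ← map_smul, ← map_smul, ← map_add]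
    refine ⟨LinearMap.mem_range_self _ _, fun i => ?_⟩
    rw [eval_one_pderiv_linearCombination_semiinvariantMonomials]
    exact (sum_mul_semiinvariantExponents_eq_zero_iff _).mpr ⟨a, b, rfl⟩ i
  · rintro ⟨⟨c, rfl⟩, hc⟩
    simp only [eval_one_pderiv_linearCombination_semiinvariantMonomials] at hc
    obtain ⟨a, b, rfl⟩ := (sum_mul_semiinvariantExponents_eq_zero_iff c).mp hc
    exact ⟨a, b, by rw [map_add, map_smul, map_smul, hg₀, hg₁]⟩

theorem linearIndependent_singularSemiinvariants [Field k] [NeZero (2 : k)] :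
    LinearIndependent k (singularSemiinvariants k) := by
  unfold singularSemiinvariants
  rw [LinearIndependent.pair_iff]
  intro s t h
  have h₁ : s + t = 0 := by simpa [smul_eval] using congrArg (eval ![1, 0, 0, 1]) h
  have h₂ : s + t * 3 = 0 := by simpa [smul_eval] using congrArg (eval ![0, 1, 1, 0]) h
  have h2t : 2 * t = 0 := by linear_combination h₂ - h₁
  have ht : t = 0 := (mul_eq_zero.mp h2t).resolve_left two_ne_zero
  exact ⟨by linear_combination h₁ - ht, ht⟩

end Quartics

theorem semiinvariant_quartics_for_order_eleven_general
    (k : Type*) [Field k] [CharZero k]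
    (ξ : k) (hξ : IsPrimitiveRoot ξ 11) :
    let σF : MvPolynomial (Fin 4) k → MvPolynomial (Fin 4) k :=
      fun F => aeval (fun i : Fin 4 => C (ξ ^ (i : ℕ)) * X i) F
    let m : Fin 5 → MvPolynomial (Fin 4) k :=
      ![X 0 ^ 2 * X 3 ^ 2, X 0 * X 1 * X 2 * X 3, X 0 * X 2 ^ 3, X 1 ^ 3 * X 3,
        X 1 ^ 2 * X 2 ^ 2]
    let g : Fin 2 → MvPolynomial (Fin 4) k :=
      ![(X 0 * X 3 - X 1 * X 2) ^ 2,
        X 0 ^ 2 * X 3 ^ 2 + 3 * X 1 ^ 2 * X 2 ^ 2 - 2 * X 0 * X 2 ^ 3 - 2 * X 1 ^ 3 * X 3]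
    (∀ F : MvPolynomial (Fin 4) k,
      (F.IsHomogeneous 4 ∧ σF F = C (ξ ^ 6) * F) ↔ F ∈ Submodule.span k (Set.range m)) ∧
    (∀ F : MvPolynomial (Fin 4) k,
      (F.IsHomogeneous 4 ∧ σF F = C (ξ ^ 6) * F ∧
        (∀ i : Fin 4, eval (fun _ => (1 : k)) (pderiv i F) = 0)) ↔
      F ∈ Submodule.span k (Set.range g)) ∧
    LinearIndependent k g := by
  intro σF m g
  have semiinvariant : ∀ F, (F.IsHomogeneous 4 ∧ σF F = C (ξ ^ 6) * F) ↔
      F ∈ Submodule.span k (Set.range m) :=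
    isHomogeneous_four_and_semiinvariant_iff_mem_span hξ
  have singular : ∀ F, F ∈ Submodule.span k (Set.range g) ↔
      F ∈ Submodule.span k (Set.range m) ∧ ∀ i, eval (fun _ => 1) (pderiv i F) = 0 :=
    mem_span_singularSemiinvariants_iff
  exact ⟨semiinvariant, fun F => by rw [← and_assoc, semiinvariant, singular],
    linearIndependent_singularSemiinvariants⟩

/-- Let `k` be an algebraically closed field of characteristic 0, `ξ` a
primitive 11th root of unity and `σ` the diagonal action `xᵢ ↦ ξⁱxᵢ` on `k⁴`.  Then the space
of quartic forms `F` with `σ·F = ξ⁶·F` is spanned by `x₀²x₃², x₀x₁x₂x₃, x₀x₂³, x₁³x₃, x₁²x₂²`,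
and the subspace of those `F` that moreover are singular at `(1,1,1,1)` is 2-dimensional,
spanned by `(x₀x₃ − x₁x₂)²` and `x₀²x₃² + 3x₁²x₂² − 2x₀x₂³ − 2x₁³x₃`. -/
theorem semiinvariant_quartics_for_order_eleven
    (k : Type*) [Field k] [IsAlgClosed k] [CharZero k]
    (ξ : k) (hξ : IsPrimitiveRoot ξ 11) :
    let σF : MvPolynomial (Fin 4) k → MvPolynomial (Fin 4) k :=
      fun F => aeval (fun i : Fin 4 => C (ξ ^ (i : ℕ)) * X i) F
    let m : Fin 5 → MvPolynomial (Fin 4) k :=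
      ![X 0 ^ 2 * X 3 ^ 2, X 0 * X 1 * X 2 * X 3, X 0 * X 2 ^ 3, X 1 ^ 3 * X 3,
        X 1 ^ 2 * X 2 ^ 2]
    let g : Fin 2 → MvPolynomial (Fin 4) k :=
      ![(X 0 * X 3 - X 1 * X 2) ^ 2,
        X 0 ^ 2 * X 3 ^ 2 + 3 * X 1 ^ 2 * X 2 ^ 2 - 2 * X 0 * X 2 ^ 3 - 2 * X 1 ^ 3 * X 3]
    (∀ F : MvPolynomial (Fin 4) k,
      (F.IsHomogeneous 4 ∧ σF F = C (ξ ^ 6) * F) ↔ F ∈ Submodule.span k (Set.range m)) ∧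
    (∀ F : MvPolynomial (Fin 4) k,
      (F.IsHomogeneous 4 ∧ σF F = C (ξ ^ 6) * F ∧
        (∀ i : Fin 4, eval (fun _ => (1 : k)) (pderiv i F) = 0)) ↔
      F ∈ Submodule.span k (Set.range g)) ∧
    LinearIndependent k g :=
  semiinvariant_quartics_for_order_eleven_general k ξ hξ
end
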